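/- Let Δy > 0, K ≥ 1, yₖ = kΔy. For the implicit upwind scheme pₖ^{n+1} + (Δt/(εΔy))·((−yₖ)⁺ pₖ^{n+1} − (−yₖ₊₁)⁻ pₖ₊₁^{n+1} − (−y_{k−1})⁺ p_{k−1}^{n+1} + (−yₖ)⁻ pₖ^{n+1}) = pₖⁿ with no-flux boundary conditions, if pₖⁿ ≥ 0 for all k then pₖ^{n+1} ≥ 0 for all k, for any Δt, ε > 0. -/
import Mathlib


theorem implicit_upwind_positivity
    (K : ℕ) (hK : 1 ≤ K) (Δy Δt ε : ℝ) (hΔy : 0 < Δy) (hΔt : 0 < Δt) (hε : 0 < ε)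
    (pn p : ℤ → ℝ)
    (hbc1 : p ((K:ℤ) + 1) = 0) (hbc2 : p (-(K:ℤ) - 1) = 0)
    (hscheme : ∀ k : ℤ, -(K:ℤ) ≤ k → k ≤ (K:ℤ) →
      p k + (Δt / (ε * Δy)) *
        (max (-((k:ℝ) * Δy)) 0 * p k
          - max ((((k:ℝ) + 1) * Δy)) 0 * p (k + 1)
          - max (-(((k:ℝ) - 1) * Δy)) 0 * p (k - 1)
          + max ((k:ℝ) * Δy) 0 * p k) = pn k)
    (hpn : ∀ k : ℤ, -(K:ℤ) ≤ k → k ≤ (K:ℤ) → 0 ≤ pn k) :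
    ∀ k : ℤ, -(K:ℤ) ≤ k → k ≤ (K:ℤ) → 0 ≤ p k := by
  have hc0 : 0 < Δt / (ε * Δy) := div_pos hΔt (mul_pos hε hΔy)
  set c := Δt / (ε * Δy) with hc
  -- one-step lemma on the right side
  have keyR : ∀ k : ℤ, 1 ≤ k → k ≤ (K:ℤ) → 0 ≤ p (k + 1) → 0 ≤ p k := by
    intro k hk1 hkK hpk1
    have hkr : (1:ℝ) ≤ (k:ℝ) := by exact_mod_cast hk1
    have h := hscheme k (by omega) hkK
    have h1 : max (-((k:ℝ) * Δy)) 0 = 0 := max_eq_right (by nlinarith)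
    have h2 : max ((((k:ℝ) + 1) * Δy)) 0 = ((k:ℝ) + 1) * Δy := max_eq_left (by nlinarith)
    have h3 : max (-(((k:ℝ) - 1) * Δy)) 0 = 0 := max_eq_right (by nlinarith)
    have h4 : max ((k:ℝ) * Δy) 0 = (k:ℝ) * Δy := max_eq_left (by nlinarith)
    rw [h1, h2, h3, h4] at h
    have hpn' := hpn k (by omega) hkK
    have hF : 0 < 1 + c * ((k:ℝ) * Δy) := by
      nlinarith [mul_pos hc0 (mul_pos (by linarith : (0:ℝ) < (k:ℝ)) hΔy)]
    have hR0 : 0 ≤ pn k + c * (((k:ℝ) + 1) * Δy) * p (k + 1) := by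
      have := mul_nonneg (mul_nonneg hc0.le
        (by nlinarith : (0:ℝ) ≤ ((k:ℝ) + 1) * Δy)) hpk1
      linarith
    have hpk : p k = (pn k + c * (((k:ℝ) + 1) * Δy) * p (k + 1)) / (1 + c * ((k:ℝ) * Δy)) := by
      rw [eq_div_iff hF.ne']
      linear_combination h
    rw [hpk]
    exact div_nonneg hR0 hF.le
  -- one-step lemma on the left side
  have keyL : ∀ k : ℤ, -(K:ℤ) ≤ k → k ≤ -1 → 0 ≤ p (k - 1) → 0 ≤ p k := by
    intro k hkK hk1 hpk1
    have hkr : (k:ℝ) ≤ -1 := by exact_mod_cast hk1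
    have h := hscheme k hkK (by omega)
    have h1 : max (-((k:ℝ) * Δy)) 0 = -((k:ℝ) * Δy) := max_eq_left (by nlinarith)
    have h2 : max ((((k:ℝ) + 1) * Δy)) 0 = 0 := max_eq_right (by nlinarith)
    have h3 : max (-(((k:ℝ) - 1) * Δy)) 0 = -(((k:ℝ) - 1) * Δy) := max_eq_left (by nlinarith)
    have h4 : max ((k:ℝ) * Δy) 0 = 0 := max_eq_right (by nlinarith)
    rw [h1, h2, h3, h4] at h
    have hpn' := hpn k hkK (by omega)
    have hF : 0 < 1 + c * (-((k:ℝ) * Δy)) := by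
      nlinarith [mul_pos hc0 (by nlinarith : (0:ℝ) < -((k:ℝ) * Δy))]
    have hR0 : 0 ≤ pn k + c * (-(((k:ℝ) - 1) * Δy)) * p (k - 1) := by
      have := mul_nonneg (mul_nonneg hc0.le
        (by nlinarith : (0:ℝ) ≤ -(((k:ℝ) - 1) * Δy))) hpk1
      linarith
    have hpk : p k = (pn k + c * (-(((k:ℝ) - 1) * Δy)) * p (k - 1)) / (1 + c * (-((k:ℝ) * Δy))) := by
      rw [eq_div_iff hF.ne']
      linear_combination h
    rw [hpk]
    exact div_nonneg hR0 hF.le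
  -- right side by downward induction
  have hright : ∀ n : ℕ, ∀ k : ℤ, 1 ≤ k → k ≤ (K:ℤ) → (K:ℤ) - k = n → 0 ≤ p k := by
    intro n
    induction n with
    | zero =>
      intro k hk1 hkK hn
      have hk : k = (K:ℤ) := by omega
      subst hk
      exact keyR K hk1 le_rfl (by rw [hbc1])
    | succ n ih =>
      intro k hk1 hkK hn
      exact keyR k hk1 hkK (ih (k + 1) (by omega) (by omega) (by omega))
  have hR : ∀ k : ℤ, 1 ≤ k → k ≤ (K:ℤ) → 0 ≤ p k := by
    intro k hk1 hkK
    exact hright ((K:ℤ) - k).toNat k hk1 hkK (by omega)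
  -- left side by upward induction
  have hleft : ∀ n : ℕ, ∀ k : ℤ, -(K:ℤ) ≤ k → k ≤ -1 → k + (K:ℤ) = n → 0 ≤ p k := by
    intro n
    induction n with
    | zero =>
      intro k hkK hk1 hn
      have hk : k = -(K:ℤ) := by omega
      subst hk
      exact keyL (-(K:ℤ)) le_rfl hk1 (by rw [show -(K:ℤ) - 1 = -(K:ℤ) - 1 from rfl, hbc2])
    | succ n ih =>
      intro k hkK hk1 hn
      exact keyL k hkK hk1 (ih (k - 1) (by omega) (by omega) (by omega))
  have hL : ∀ k : ℤ, -(K:ℤ) ≤ k → k ≤ -1 → 0 ≤ p k := by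
    intro k hkK hk1
    exact hleft (k + (K:ℤ)).toNat k hkK hk1 (by omega)
  -- finish
  intro k hk1 hk2
  rcases lt_trichotomy k 0 with hk | hk | hk
  · exact hL k hk1 (by omega)
  · subst hk
    have h := hscheme 0 (by omega) (by omega)
    have h1 : max (-(((0:ℤ):ℝ) * Δy)) 0 = 0 := by norm_num
    have h2 : max (((((0:ℤ):ℝ)) + 1) * Δy) 0 = Δy := by norm_num [max_eq_left hΔy.le]
    have h3 : max (-((((0:ℤ):ℝ) - 1) * Δy)) 0 = Δy := by
      push_cast
      rw [show -((0 - 1) * Δy) = Δy by ring]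
      exact max_eq_left hΔy.le
    have h4 : max (((0:ℤ):ℝ) * Δy) 0 = 0 := by norm_num
    rw [h1, h2, h3, h4] at h
    have hp1 : 0 ≤ p 1 := hR 1 le_rfl (by exact_mod_cast hK)
    have hpm1 : 0 ≤ p (-1) := hL (-1) (by omega) le_rfl
    have hpn' := hpn 0 (by omega) (by omega)
    have e1 : (0:ℤ) + 1 = 1 := by norm_num
    have e2 : (0:ℤ) - 1 = -1 := by norm_num
    rw [e1, e2] at h
    have t1 := mul_nonneg (mul_nonneg hc0.le hΔy.le) hp1
    have t2 := mul_nonneg (mul_nonneg hc0.le hΔy.le) hpm1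
    have hpk : p 0 = pn 0 + c * Δy * p 1 + c * Δy * p (-1) := by
      linear_combination h
    rw [hpk]
    linarith
  · exact hR k (by omega) hk2
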